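/- Let G be a totally disconnected locally compact group, α a continuous endomorphism of G, and U a compact open subgroup of G that is tidy for α, and suppose [U : U ∩ α⁻¹(U)] > 1. Then the subsets α^m(U) for m ∈ ℤ are pairwise distinct; precisely: for all m, n ∈ ℕ, (a) αᵐ(U) = αⁿ(U) implies m = n, (b) α^{-m}(U) = α^{-n}(U) implies m = n, and (c) αᵐ(U) = α^{-n}(U) implies m = n = 0. Here αᵐ(U) denotes the image of U under αᵐ and α^{-n}(U) the preimage of U under αⁿ. -/

import Mathlib

open Pointwise Subgroup Filter

variable {G : Type*}

/-- The `n`-fold iterate of an endomorphism `α : G →* G`, as a monoid homomorphism. -/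
def iterHom [Group G] (α : G →* G) : ℕ → G →* G
  | 0 => MonoidHom.id G
  | n + 1 => α.comp (iterHom α n)

/-- The descending sequence `U_0 = U`, `U_{n+1} = U ⊓ α(U_n)`. -/
def seqU [Group G] (α : G →* G) (U : Subgroup G) : ℕ → Subgroup G
  | 0 => U
  | n + 1 => U ⊓ Subgroup.map α (seqU α U n)

/-- `U₊ = ⋂ₙ Uₙ`. -/
def Uplus [Group G] (α : G →* G) (U : Subgroup G) : Subgroup G := ⨅ n, seqU α U n

/-- `U₋ = ⋂ₙ α^{-n}(U)`. -/
def Uminus [Group G] (α : G →* G) (U : Subgroup G) : Subgroup G :=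
  ⨅ n, Subgroup.comap (iterHom α n) U

/-- `U₊₊ = ⋃ₙ αⁿ(U₊)` as a subset of `G`. -/
def Upp [Group G] (α : G →* G) (U : Subgroup G) : Set G :=
  ⋃ n, iterHom α n '' (Uplus α U : Set G)

/-- `U₋₋ = ⋃ₙ α^{-n}(U₋)` as a subset of `G`. -/
def Umm [Group G] (α : G →* G) (U : Subgroup G) : Set G :=
  ⋃ n, iterHom α n ⁻¹' (Uminus α U : Set G)

/-- `U₋ₙ = ⋂_{k=0}^{n} α^{-k}(U)`. -/
def Uneg [Group G] (α : G →* G) (U : Subgroup G) (n : ℕ) : Subgroup G :=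
  ⨅ k ∈ Finset.range (n + 1), Subgroup.comap (iterHom α k) U

/-- `U` is tidy above for `α` if `U = U₊U₋`. -/
def TidyAbove [Group G] (α : G →* G) (U : Subgroup G) : Prop :=
  (U : Set G) = (Uplus α U : Set G) * (Uminus α U : Set G)

/-- `U` is tidy below for `α` if `U₋₋` is closed. -/
def TidyBelow [Group G] [TopologicalSpace G] (α : G →* G) (U : Subgroup G) : Prop :=
  IsClosed (Umm α U)

/-- `U` is tidy for `α` if it is tidy above and tidy below for `α`. -/
def Tidy [Group G] [TopologicalSpace G] (α : G →* G) (U : Subgroup G) : Prop :=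
  TidyAbove α U ∧ TidyBelow α U

/-- The scale of `α`: the minimum of `[α(V) : α(V) ∩ V]` over compact open subgroups `V`. -/
noncomputable def scale [Group G] [TopologicalSpace G] (α : G →* G) : ℕ :=
  sInf {n : ℕ | ∃ V : Subgroup G, IsCompact (V : Set G) ∧ IsOpen (V : Set G) ∧
    n = Subgroup.relIndex V (Subgroup.map α V)}

section IterHomBasics

variable [Group G] (α : G →* G) (U : Subgroup G)

theorem iterHom_succ_apply (k : ℕ) (x : G) : iterHom α (k + 1) x = α (iterHom α k x) := rfl

theorem iterHom_add (j k : ℕ) :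
    iterHom α (j + k) = (iterHom α k).comp (iterHom α j) := by
  induction k with
  | zero => rfl
  | succ k ih =>
    show α.comp (iterHom α (j + k)) = _
    rw [ih]
    rfl

theorem iterHom_add_apply (j k : ℕ) (x : G) :
    iterHom α (j + k) x = iterHom α k (iterHom α j x) := by
  rw [iterHom_add]; rfl

theorem seqU_succ (n : ℕ) : seqU α U (n + 1) = U ⊓ Subgroup.map α (seqU α U n) := rfl

theorem seqU_le_U (n : ℕ) : seqU α U n ≤ U := by
  cases n with
  | zero => exact le_rfl
  | succ n => exact inf_le_left

theorem seqU_succ_le (n : ℕ) : seqU α U (n + 1) ≤ seqU α U n := by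
  induction n with
  | zero => exact inf_le_left
  | succ n ih => exact inf_le_inf_left U (Subgroup.map_mono ih)

theorem seqU_antitone : Antitone (seqU α U) :=
  antitone_nat_of_succ_le (seqU_succ_le α U)

theorem Uplus_le_seqU (n : ℕ) : Uplus α U ≤ seqU α U n := iInf_le _ n

theorem Uplus_le_U : Uplus α U ≤ U := Uplus_le_seqU α U 0

theorem mem_Uplus {x : G} : x ∈ Uplus α U ↔ ∀ n, x ∈ seqU α U n := by
  simp [Uplus, Subgroup.mem_iInf]

theorem Uminus_le_comap (n : ℕ) : Uminus α U ≤ Subgroup.comap (iterHom α n) U :=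
  iInf_le _ n

theorem mem_Uminus {x : G} : x ∈ Uminus α U ↔ ∀ n, iterHom α n x ∈ U := by
  simp [Uminus, Subgroup.mem_iInf, Subgroup.mem_comap]

theorem Uminus_le_U : Uminus α U ≤ U := fun x hx => (mem_Uminus α U).mp hx 0

theorem iter_mem_Uminus {x : G} (hx : x ∈ Uminus α U) (k : ℕ) :
    iterHom α k x ∈ Uminus α U := by
  rw [mem_Uminus] at hx ⊢
  intro n
  rw [← iterHom_add_apply]
  exact hx (k + n)

theorem iter_Uminus_mem_seqU {x : G} (hx : x ∈ Uminus α U) (k : ℕ) :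
    iterHom α k x ∈ seqU α U k := by
  induction k with
  | zero => exact Uminus_le_U α U hx
  | succ k ih =>
    refine ⟨Uminus_le_U α U (iter_mem_Uminus α U hx (k + 1)), ?_⟩
    exact ⟨iterHom α k x, ih, rfl⟩

end IterHomBasics
section TopologyBasics

variable [Group G] [TopologicalSpace G] [IsTopologicalGroup G]
  (α : G →* G) (U : Subgroup G)

theorem continuous_iterHom (hα : Continuous α) (k : ℕ) :
    Continuous (iterHom α k) := by
  induction k with
  | zero => exact continuous_id
  | succ k ih => exact hα.comp ih

theorem t2_of_td [TotallyDisconnectedSpace G] : T2Space G :=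
  IsTopologicalGroup.t2Space_iff_one_closed.mpr
    (connectedComponent_eq_singleton (1 : G) ▸ isClosed_connectedComponent)

variable [T2Space G] (hα : Continuous α) (hUc : IsCompact (U : Set G))

include hα hUc in
theorem isCompact_seqU (k : ℕ) : IsCompact (seqU α U k : Set G) := by
  induction k with
  | zero => exact hUc
  | succ k ih =>
    have : (seqU α U (k + 1) : Set G) = (U : Set G) ∩ (α '' (seqU α U k : Set G)) := by
      rw [seqU_succ, Subgroup.coe_inf, Subgroup.coe_map]
    rw [this]
    exact hUc.inter_right (ih.image hα).isClosed

include hα hUc in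
theorem isClosed_Uminus : IsClosed (Uminus α U : Set G) := by
  have : (Uminus α U : Set G) = ⋂ n, (iterHom α n) ⁻¹' (U : Set G) := by
    rw [Uminus, Subgroup.coe_iInf]
    simp [Subgroup.coe_comap]
  rw [this]
  exact isClosed_iInter fun n => hUc.isClosed.preimage (continuous_iterHom α hα n)

include hα hUc in
theorem Uplus_le_map : Uplus α U ≤ Subgroup.map α (Uplus α U) := by
  intro x hx
  rw [mem_Uplus] at hx
  set F : ℕ → Set G := fun n => (α ⁻¹' {x}) ∩ (seqU α U n : Set G) with hF
  have hsub : ∀ n, F (n + 1) ⊆ F n := fun n =>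
    Set.inter_subset_inter_right _ (seqU_succ_le α U n)
  have hne : ∀ n, (F n).Nonempty := by
    intro n
    obtain ⟨y, hy, hyx⟩ := (hx (n + 1)).2
    exact ⟨y, hyx, hy⟩
  have hcl : ∀ n, IsClosed (F n) := fun n =>
    (isClosed_singleton.preimage hα).inter (isCompact_seqU α U hα hUc n).isClosed
  have hc0 : IsCompact (F 0) :=
    ((isCompact_seqU α U hα hUc 0).inter_left (isClosed_singleton.preimage hα))
  obtain ⟨y, hy⟩ :=
    IsCompact.nonempty_iInter_of_sequence_nonempty_isCompact_isClosed F hsub hne hc0 hcl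
  simp only [Set.mem_iInter, hF, Set.mem_inter_iff, Set.mem_preimage, Set.mem_singleton_iff] at hy
  refine ⟨y, (mem_Uplus α U).mpr fun n => SetLike.mem_coe.mp (hy n).2, (hy 0).1⟩

include hα hUc in
theorem exists_iter_pre (k : ℕ) {x : G} (hx : x ∈ Uplus α U) :
    ∃ y ∈ Uplus α U, iterHom α k y = x := by
  induction k with
  | zero => exact ⟨x, hx, rfl⟩
  | succ k ih =>
    obtain ⟨y, hy, hyx⟩ := ih
    obtain ⟨z, hz, hzy⟩ := Uplus_le_map α U hα hUc hy
    refine ⟨z, hz, ?_⟩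
    rw [Nat.add_comm k 1, iterHom_add_apply]
    show iterHom α k (α z) = x
    rw [hzy, hyx]

include hα hUc in
theorem Uplus_le_map_iter (k : ℕ) : Uplus α U ≤ Subgroup.map (iterHom α k) (Uplus α U) := by
  intro x hx
  obtain ⟨y, hy, hyx⟩ := exists_iter_pre α U hα hUc k hx
  exact ⟨y, hy, hyx⟩

include hα hUc in
theorem exists_orbit (k : ℕ) {x : G} (hx : x ∈ Uplus α U) :
    ∃ y ∈ Uplus α U, (∀ j ≤ k, iterHom α j y ∈ Uplus α U) ∧ iterHom α k y = x := by
  induction k with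
  | zero =>
    refine ⟨x, hx, fun j hj => ?_, rfl⟩
    interval_cases j
    exact hx
  | succ k ih =>
    obtain ⟨y, hy, horb, hyx⟩ := ih
    obtain ⟨z, hz, hzy⟩ := Uplus_le_map α U hα hUc hy
    have hzj : ∀ j, iterHom α (j + 1) z = iterHom α j y := by
      intro j
      rw [Nat.add_comm j 1, iterHom_add_apply]
      show iterHom α j (α z) = _
      rw [hzy]
    refine ⟨z, hz, ?_, by rw [hzj k, hyx]⟩
    intro j hj
    cases j with
    | zero => exact hz
    | succ j => rw [hzj j]; exact horb j (by omega)

end TopologyBasics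
section Escape

variable [Group G] (α : G →* G) (U : Subgroup G)

theorem exists_escape (hta : TidyAbove α U)
    (hs : 1 < Subgroup.relIndex (Subgroup.comap α U) U) :
    ∃ a ∈ Uplus α U, α a ∉ U := by
  have hu : ∃ u ∈ U, α u ∉ U := by
    by_contra h
    push_neg at h
    have hle : U ≤ Subgroup.comap α U := fun u hu => h u hu
    rw [Subgroup.relIndex_eq_one.mpr hle] at hs
    omega
  obtain ⟨u, huU, huα⟩ := hu
  have hmem : u ∈ (Uplus α U : Set G) * (Uminus α U : Set G) := by
    rw [← hta]; exact huU
  obtain ⟨p, hp, q, hq, hpq⟩ := hmem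
  refine ⟨p, hp, fun hpU => huα ?_⟩
  have hqU : α q ∈ U := Uminus_le_comap α U 1 hq
  rw [← hpq, map_mul]
  exact U.mul_mem hpU hqU

end Escape
section Core

variable [Group G] [TopologicalSpace G] [IsTopologicalGroup G] [T2Space G]

theorem map_iter_collision (α : G →* G) (hα : Continuous α) (U : Subgroup G)
    (hUc : IsCompact (U : Set G)) (hUo : IsOpen (U : Set G)) (hU : Tidy α U)
    {a : G} (ha : a ∈ Uplus α U) (haU : α a ∉ U) {m d : ℕ} (hd : 0 < d)
    (hW : Subgroup.map (iterHom α (m + d)) U = Subgroup.map (iterHom α m) U) : False := by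
  classical
  set A := Uplus α U with hA
  set M := Uminus α U with hM
  set W := Subgroup.map (iterHom α m) U with hWdef
  have hMclosed : IsClosed (M : Set G) := isClosed_Uminus α U hα hUc
  have hWc : IsCompact (W : Set G) := by
    rw [hWdef, Subgroup.coe_map]
    exact hUc.image (continuous_iterHom α hα m)
  have hWd : Subgroup.map (iterHom α d) W = W := by
    rw [hWdef, Subgroup.map_map, ← iterHom_add, hW]
  have hWtd : ∀ t, Subgroup.map (iterHom α (t * d)) W = W := by
    intro t
    induction t with
    | zero => rw [Nat.zero_mul]; exact Subgroup.map_id W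
    | succ t ih =>
      rw [show (t + 1) * d = t * d + d by ring, iterHom_add, ← Subgroup.map_map, ih, hWd]
  -- the subgroup corresponding to Umm
  set Smm : Subgroup G := ⨆ n, Subgroup.comap (iterHom α n) M with hSmm
  have hmono : Monotone (fun n => Subgroup.comap (iterHom α n) M) := by
    intro i j hij x hx
    simp only [Subgroup.mem_comap] at hx ⊢
    have hj : iterHom α j x = iterHom α (j - i) (iterHom α i x) := by
      rw [← iterHom_add_apply, Nat.add_sub_cancel' hij]
    rw [hj]
    exact iter_mem_Uminus α U hx (j - i)
  have hdir := hmono.directed_le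
  have hScoe : (Smm : Set G) = Umm α U := by
    rw [hSmm, Subgroup.coe_iSup_of_directed hdir, Umm]
    simp [Subgroup.coe_comap, hM]
  have hSclosed : IsClosed (Smm : Set G) := by rw [hScoe]; exact hU.2
  have hmemSmm : ∀ {x : G}, x ∈ Smm ↔ ∃ n, iterHom α n x ∈ M := by
    intro x
    rw [hSmm, Subgroup.mem_iSup_of_directed hdir]
    simp [Subgroup.mem_comap]
  set S := Smm ⊓ W with hS
  have hScompact : IsCompact (S : Set G) := by
    rw [hS, Subgroup.coe_inf]
    exact hWc.inter_left hSclosed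
  have hSmap : Subgroup.map (iterHom α d) S = S := by
    apply le_antisymm
    · rintro x ⟨y, hy, rfl⟩
      rcases Subgroup.mem_inf.mp hy with ⟨hy1, hy2⟩
      refine Subgroup.mem_inf.mpr ⟨?_, ?_⟩
      · obtain ⟨n, hn⟩ := hmemSmm.mp hy1
        refine hmemSmm.mpr ⟨n, ?_⟩
        rw [← iterHom_add_apply, Nat.add_comm d n, iterHom_add_apply]
        exact iter_mem_Uminus α U hn d
      · rw [← hWd]; exact Subgroup.mem_map_of_mem _ hy2
    · intro x hx
      rcases Subgroup.mem_inf.mp hx with ⟨hx1, hx2⟩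
      rw [← hWd] at hx2
      obtain ⟨y, hy, rfl⟩ := hx2
      obtain ⟨n, hn⟩ := hmemSmm.mp hx1
      refine ⟨y, Subgroup.mem_inf.mpr ⟨hmemSmm.mpr ⟨d + n, ?_⟩, hy⟩, rfl⟩
      rw [iterHom_add_apply]
      exact hn
  have hStd : ∀ t, Subgroup.map (iterHom α (t * d)) S = S := by
    intro t
    induction t with
    | zero => rw [Nat.zero_mul]; exact Subgroup.map_id S
    | succ t ih =>
      rw [show (t + 1) * d = t * d + d by ring, iterHom_add, ← Subgroup.map_map, ih, hSmap]
  -- Lemma A : S ≤ M, via Baire category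
  have lemA : S ≤ M := by
    haveI : CompactSpace ↥S := isCompact_iff_compactSpace.mp hScompact
    haveI : Nonempty ↥S := ⟨⟨1, S.one_mem⟩⟩
    set C : ℕ → Subgroup ↥S := fun n => (Subgroup.comap (iterHom α n) M).subgroupOf S with hC
    have hCmem : ∀ (n : ℕ) (x : ↥S), x ∈ C n ↔ iterHom α n (x : G) ∈ M := by
      intro n x
      rw [hC]
      simp [Subgroup.mem_subgroupOf, Subgroup.mem_comap]
    have hCcoe : ∀ n, (C n : Set ↥S) =
        Subtype.val ⁻¹' ((Subgroup.comap (iterHom α n) M : Subgroup G) : Set G) := by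
      intro n
      ext x
      simp [hC, Subgroup.mem_subgroupOf]
    have hCclosed : ∀ n, IsClosed ((C n : Subgroup ↥S) : Set ↥S) := by
      intro n
      rw [hCcoe n]
      refine IsClosed.preimage continuous_subtype_val ?_
      rw [Subgroup.coe_comap]
      exact hMclosed.preimage (continuous_iterHom α hα n)
    have hCcover : ⋃ n, ((C n : Subgroup ↥S) : Set ↥S) = Set.univ := by
      ext x
      simp only [Set.mem_iUnion, Set.mem_univ, iff_true, SetLike.mem_coe]
      have hx1 : (x : G) ∈ Smm := (Subgroup.mem_inf.mp x.2).1
      obtain ⟨n, hn⟩ := hmemSmm.mp hx1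
      exact ⟨n, (hCmem n x).mpr hn⟩
    obtain ⟨n0, hn0⟩ := nonempty_interior_of_iUnion_of_closed hCclosed hCcover
    obtain ⟨x0, hx0⟩ := hn0
    have hCopen : IsOpen ((C n0 : Subgroup ↥S) : Set ↥S) :=
      Subgroup.isOpen_of_mem_nhds (C n0) (mem_interior_iff_mem_nhds.mp hx0)
    haveI : Finite (↥S ⧸ C n0) := Subgroup.quotient_finite_of_isOpen (C n0) hCopen
    haveI := Fintype.ofFinite (↥S ⧸ C n0)
    set f : ↥S ⧸ C n0 → ℕ := fun q =>
      Classical.choose (hmemSmm.mp ((Subgroup.mem_inf.mp (q.out).2).1)) with hf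
    set K : ℕ := n0 + Finset.univ.sup f with hK
    have hbound : ∀ x : ↥S, iterHom α K (x : G) ∈ M := by
      intro x
      set q : ↥S ⧸ C n0 := QuotientGroup.mk x with hq
      have hrep : (QuotientGroup.mk q.out : ↥S ⧸ C n0) = QuotientGroup.mk x := by
        rw [QuotientGroup.out_eq']
      have hdiff : (q.out)⁻¹ * x ∈ C n0 := QuotientGroup.eq.mp hrep
      have hr : ((q.out : ↥S) : G) ∈ Subgroup.comap (iterHom α (f q)) M :=
        Subgroup.mem_comap.mpr
          (Classical.choose_spec (hmemSmm.mp ((Subgroup.mem_inf.mp (q.out).2).1)))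
      have hr' : ((q.out : ↥S) : G) ∈ Subgroup.comap (iterHom α K) M :=
        hmono (by rw [hK]; exact le_add_of_le_right (Finset.le_sup (Finset.mem_univ q))) hr
      have hd' : (((q.out)⁻¹ * x : ↥S) : G) ∈ Subgroup.comap (iterHom α K) M :=
        hmono (by rw [hK]; exact Nat.le_add_right n0 _) ((hCmem n0 _).mp hdiff)
      have hx' : ((q.out : ↥S) : G) * (((q.out)⁻¹ * x : ↥S) : G) = (x : G) := by
        push_cast
        group
      have hfin : (x : G) ∈ Subgroup.comap (iterHom α K) M :=
        hx' ▸ (Subgroup.comap (iterHom α K) M).mul_mem hr' hd'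
      exact Subgroup.mem_comap.mp hfin
    intro z hz
    obtain ⟨w, hw, hwz⟩ : z ∈ Subgroup.map (iterHom α (K * d)) S := by
      rw [hStd K]; exact hz
    have h1 : iterHom α K w ∈ M := hbound ⟨w, hw⟩
    have h2 : z = iterHom α (K * d - K) (iterHom α K w) := by
      rw [← iterHom_add_apply, Nat.add_sub_cancel' (Nat.le_mul_of_pos_right K hd), hwz]
    rw [h2]
    exact iter_mem_Uminus α U h1 (K * d - K)
  -- Lemma B and C
  have hAW : A ≤ W := by
    intro x hx
    obtain ⟨y, hy, hyx⟩ := exists_iter_pre α U hα hUc m hx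
    exact ⟨y, Uplus_le_U α U hy, hyx⟩
  have lemB : ∀ {z : G}, z ∈ M → z ∈ W → z ∈ A := by
    intro z hzM hzW
    rw [hA, mem_Uplus]
    intro n
    obtain ⟨w, hw, hwz⟩ : z ∈ Subgroup.map (iterHom α (n * d)) W := by
      rw [hWtd n]; exact hzW
    have hwS : w ∈ S :=
      Subgroup.mem_inf.mpr ⟨hmemSmm.mpr ⟨n * d, by rw [hwz]; exact hzM⟩, hw⟩
    have hzn : z ∈ seqU α U (n * d) := by
      rw [← hwz]; exact iter_Uminus_mem_seqU α U (lemA hwS) (n * d)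
    exact seqU_antitone α U (Nat.le_mul_of_pos_right n hd) hzn
  have lemC : U ⊓ W = A := by
    apply le_antisymm
    · rintro x ⟨hxU, hxW⟩
      have hx' : x ∈ (A : Set G) * (M : Set G) := by rw [← hU.1]; exact hxU
      obtain ⟨p, hp, q, hq, hpq⟩ := hx'
      have hqW : q ∈ W := by
        have hqe : q = p⁻¹ * x := by rw [← hpq]; group
        rw [hqe]
        exact W.mul_mem (W.inv_mem (hAW hp)) hxW
      have hqA : q ∈ A := lemB hq hqW
      rw [← hpq]
      exact A.mul_mem hp hqA
    · exact le_inf (Uplus_le_U α U) hAW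
  have hkerW : ∀ {x : G}, x ∈ W → iterHom α d x = 1 → x ∈ A := by
    intro x hxW hxk
    have hxS : x ∈ S :=
      Subgroup.mem_inf.mpr ⟨hmemSmm.mpr ⟨d, by rw [hxk]; exact M.one_mem⟩, hxW⟩
    exact lemB (lemA hxS) hxW
  -- The subgroup B = α^d(A)
  set B := Subgroup.map (iterHom α d) A with hB
  have hAB : A ≤ B := Uplus_le_map_iter α U hα hUc d
  have hBW : B ≤ W := by
    rw [hB, ← hWd]
    exact Subgroup.map_mono hAW
  have hbB : α a ∈ B := by
    obtain ⟨y, hy, hya⟩ := exists_iter_pre α U hα hUc (d - 1) ha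
    refine ⟨y, hy, ?_⟩
    rw [show d = (d - 1) + 1 by omega, iterHom_succ_apply, hya]
  -- index computations
  haveI : CompactSpace ↥W := isCompact_iff_compactSpace.mp hWc
  have hopen : IsOpen ((U.subgroupOf W : Subgroup ↥W) : Set ↥W) := by
    have hcoe : ((U.subgroupOf W : Subgroup ↥W) : Set ↥W) = Subtype.val ⁻¹' (U : Set G) := by
      ext x; simp [Subgroup.mem_subgroupOf]
    rw [hcoe]
    exact hUo.preimage continuous_subtype_val
  haveI : Finite (↥W ⧸ U.subgroupOf W) := Subgroup.quotient_finite_of_isOpen _ hopen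
  have hrne : Subgroup.relIndex A W ≠ 0 := by
    rw [← lemC, Subgroup.inf_relIndex_right]
    exact Subgroup.index_ne_zero_of_finite
  have hmul : Subgroup.relIndex A B * Subgroup.relIndex B W = Subgroup.relIndex A W :=
    Subgroup.relIndex_mul_relIndex A B W hAB hBW
  -- bijection between the two coset spaces
  have hmemW : ∀ x : ↥W, iterHom α d (x : G) ∈ W := fun x => by
    have hmm : iterHom α d (x : G) ∈ Subgroup.map (iterHom α d) W :=
      Subgroup.mem_map_of_mem _ x.2
    rwa [hWd] at hmm
  set g : ↥W → ↥W := fun x => ⟨iterHom α d (x : G), hmemW x⟩ with hg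
  have hgrel : ∀ x y : ↥W, (x⁻¹ * y ∈ A.subgroupOf W) → ((g x)⁻¹ * g y ∈ B.subgroupOf W) := by
    intro x y hxy
    rw [Subgroup.mem_subgroupOf] at hxy ⊢
    show (iterHom α d (x : G))⁻¹ * iterHom α d (y : G) ∈ B
    rw [← map_inv, ← map_mul, hB]
    exact Subgroup.mem_map_of_mem _ hxy
  set φ : (↥W ⧸ A.subgroupOf W) → (↥W ⧸ B.subgroupOf W) :=
    Quotient.map' g (fun x y hxy =>
      QuotientGroup.leftRel_apply.mpr (hgrel x y (QuotientGroup.leftRel_apply.mp hxy)))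
    with hφ
  have hsurj : Function.Surjective φ := by
    intro qy
    refine Quotient.inductionOn' qy (fun y => ?_)
    obtain ⟨x, hxW, hxy⟩ : (y : G) ∈ Subgroup.map (iterHom α d) W := by
      rw [hWd]; exact y.2
    refine ⟨Quotient.mk'' ⟨x, hxW⟩, ?_⟩
    rw [hφ, Quotient.map'_mk'']
    congr 1
    exact Subtype.ext hxy
  have hinj : Function.Injective φ := by
    intro q1 q2 h
    refine Quotient.inductionOn₂' q1 q2 (fun x y h => ?_) h
    rw [hφ, Quotient.map'_mk'', Quotient.map'_mk''] at h
    have hrel := QuotientGroup.leftRel_apply.mp (Quotient.exact' h)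
    rw [Subgroup.mem_subgroupOf] at hrel
    have hrel' : iterHom α d ((x : G)⁻¹ * (y : G)) ∈ B := by
      rw [map_mul, map_inv]
      exact hrel
    obtain ⟨u, huA, hu⟩ := hrel'
    apply Quotient.sound'
    rw [QuotientGroup.leftRel_apply, Subgroup.mem_subgroupOf]
    show (x : G)⁻¹ * (y : G) ∈ A
    set z := (x : G)⁻¹ * (y : G) with hz
    have hzW : z ∈ W := W.mul_mem (W.inv_mem x.2) y.2
    have hkW : z * u⁻¹ ∈ W := W.mul_mem hzW (W.inv_mem (hAW huA))
    have hk1 : iterHom α d (z * u⁻¹) = 1 := by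
      rw [map_mul, map_inv, hu]
      group
    have hzu : z * u⁻¹ ∈ A := hkerW hkW hk1
    have : (z * u⁻¹) * u ∈ A := A.mul_mem hzu huA
    simpa using this
  have hcard : Subgroup.relIndex B W = Subgroup.relIndex A W := by
    have hcc := Nat.card_congr (Equiv.ofBijective φ ⟨hinj, hsurj⟩)
    simp only [Subgroup.relIndex, Subgroup.index]
    exact hcc.symm
  rw [hcard] at hmul
  have h1 : Subgroup.relIndex A B = 1 := by
    rcases Nat.eq_zero_or_pos (Subgroup.relIndex A W) with h0 | h0
    · exact absurd h0 hrne
    · have h2 : Subgroup.relIndex A B * Subgroup.relIndex A W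
          = 1 * Subgroup.relIndex A W := by
        rw [Nat.one_mul]
        exact hmul
      exact Nat.eq_of_mul_eq_mul_right h0 h2
  have hBA : B ≤ A := Subgroup.relIndex_eq_one.mp h1
  exact haU (Uplus_le_U α U (hBA hbB))

end Core
/-- If `U` is tidy for `α` and `[U : U ∩ α⁻¹(U)] > 1`, then the images and preimages
`αᵐ(U)`, `α^{-n}(U)` for `m, n ∈ ℕ` are pairwise distinct. -/
theorem distinct_images [Group G] [TopologicalSpace G] [IsTopologicalGroup G]
    [TotallyDisconnectedSpace G] [LocallyCompactSpace G]
    (α : G →* G) (hα : Continuous α)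
    (U : Subgroup G) (hUc : IsCompact (U : Set G)) (hUo : IsOpen (U : Set G))
    (hU : Tidy α U) (hs : 1 < Subgroup.relIndex (Subgroup.comap α U) U) :
    (∀ m n : ℕ, Subgroup.map (iterHom α m) U = Subgroup.map (iterHom α n) U → m = n) ∧
    (∀ m n : ℕ,
      Subgroup.comap (iterHom α m) U = Subgroup.comap (iterHom α n) U → m = n) ∧
    (∀ m n : ℕ,
      Subgroup.map (iterHom α m) U = Subgroup.comap (iterHom α n) U → m = 0 ∧ n = 0) := by
  haveI : T2Space G := t2_of_td
  obtain ⟨a, haA, haU⟩ := exists_escape α U hU.1 hs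
  have keyA : ∀ m n : ℕ, m < n →
      Subgroup.map (iterHom α m) U = Subgroup.map (iterHom α n) U → False := by
    intro m n hmn heq
    refine map_iter_collision α hα U hUc hUo hU haA haU (m := m) (d := n - m)
      (by omega) ?_
    rw [show m + (n - m) = n by omega]
    exact heq.symm
  refine ⟨?_, ?_, ?_⟩
  · intro m n h
    rcases lt_trichotomy m n with hlt | he | hgt
    · exact (keyA m n hlt h).elim
    · exact he
    · exact (keyA n m hgt h.symm).elim
  · have keyB : ∀ m n : ℕ, m < n →
        Subgroup.comap (iterHom α m) U = Subgroup.comap (iterHom α n) U → False := by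
      intro m n hmn heq
      obtain ⟨y, hyA, horb, hyk⟩ := exists_orbit α U hα hUc (n - 1) haA
      have hym : y ∈ Subgroup.comap (iterHom α m) U :=
        Subgroup.mem_comap.mpr (Uplus_le_U α U (horb m (by omega)))
      rw [heq] at hym
      have hyn : iterHom α n y ∈ U := hym
      rw [show n = (n - 1) + 1 by omega, iterHom_succ_apply, hyk] at hyn
      exact haU hyn
    intro m n h
    rcases lt_trichotomy m n with hlt | he | hgt
    · exact (keyB m n hlt h).elim
    · exact he
    · exact (keyB n m hgt h.symm).elim
  · intro m n h
    have hUle : U ≤ Subgroup.comap (iterHom α n) U := by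
      intro u hu
      have hu' : u ∈ (Uplus α U : Set G) * (Uminus α U : Set G) := by
        rw [← hU.1]; exact hu
      obtain ⟨p, hp, q, hq, hpq⟩ := hu'
      have hpW : p ∈ Subgroup.map (iterHom α m) U := by
        obtain ⟨y, hy, hyx⟩ := exists_iter_pre α U hα hUc m hp
        exact ⟨y, Uplus_le_U α U hy, hyx⟩
      rw [h] at hpW
      have hq' : q ∈ Subgroup.comap (iterHom α n) U := Uminus_le_comap α U n hq
      rw [← hpq]
      exact Subgroup.mul_mem _ hpW hq'
    have hn : n = 0 := by
      by_contra hn0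
      obtain ⟨y, hyA, horb, hyk⟩ := exists_orbit α U hα hUc (n - 1) haA
      have hyn : iterHom α n y ∈ U := hUle (Uplus_le_U α U hyA)
      rw [show n = (n - 1) + 1 by omega, iterHom_succ_apply, hyk] at hyn
      exact absurd hyn haU
    subst hn
    refine ⟨?_, rfl⟩
    have h' : Subgroup.map (iterHom α m) U = U := by
      rw [h]; exact Subgroup.comap_id U
    by_contra hm0
    obtain ⟨y, hyA, horb, hyk⟩ := exists_orbit α U hα hUc (m - 1) haA
    have hym : iterHom α m y ∈ Subgroup.map (iterHom α m) U :=
      Subgroup.mem_map_of_mem _ (Uplus_le_U α U hyA)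
    rw [h'] at hym
    rw [show m = (m - 1) + 1 by omega, iterHom_succ_apply, hyk] at hym
    exact haU hym
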